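/- Any Euclidean motion invariant linear partial differential operator of the second order on ℝⁿ (with continuous coefficients and not all second-order coefficients vanishing) is of the form L = αΔ + β for some α ∈ ℂ\{0} and β ∈ ℂ, where Δ is the Laplacian. -/

import Mathlib

open scoped BigOperators

noncomputable section

/-- Partial derivative in the `i`-th coordinate direction. -/
def pd {d : ℕ} (i : Fin d) (u : (Fin d → ℝ) → ℂ) : (Fin d → ℝ) → ℂ :=
  fun x => fderiv ℝ u x (Pi.single i 1)

/-- Iterated mixed partial derivative `∂^α` for a multi-index `α`. -/
def pdMulti {d : ℕ} (α : Fin d → ℕ) (u : (Fin d → ℝ) → ℂ) : (Fin d → ℝ) → ℂ :=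
  (List.finRange d).foldr (fun i v => (pd i)^[α i] v) u

/-- The finite set of multi-indices (on `d` variables) of total degree at most `m`. -/
def mIdx (d m : ℕ) : Finset (Fin d → ℕ) :=
  (Fintype.piFinset fun _ : Fin d => Finset.range (m + 1)).filter fun α => (∑ i, α i) ≤ m

/-- The linear partial differential operator `L = ∑_{|α| ≤ m} a_α ∂^α`. -/
def opApply {d : ℕ} (m : ℕ) (a : (Fin d → ℕ) → (Fin d → ℝ) → ℂ)
    (u : (Fin d → ℝ) → ℂ) : (Fin d → ℝ) → ℂ :=
  fun x => ∑ α ∈ mIdx d m, a α x * pdMulti α u x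

/-- Smooth (`C^∞`) functions. -/
def SmoothFn {d : ℕ} (u : (Fin d → ℝ) → ℂ) : Prop := ContDiff ℝ (⊤ : ℕ∞) u

/-- Membership in the orthogonal group `O(n)`:  `ᵗR R = I`. -/
def IsOrth {n : ℕ} (R : Matrix (Fin n) (Fin n) ℝ) : Prop :=
  R.transpose * R = 1

/-- The Laplacian `Δ = ∂₁² + ⋯ + ∂ₙ²` on `ℝⁿ`. -/
def lap {n : ℕ} (u : (Fin n → ℝ) → ℂ) : (Fin n → ℝ) → ℂ :=
  fun x => ∑ i : Fin n, pd i (pd i u) x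

/-- `L` is translation invariant: `T_y^* L f = L T_y^* f`. -/
def TransInvE {n : ℕ} (m : ℕ) (a : (Fin n → ℕ) → (Fin n → ℝ) → ℂ) : Prop :=
  ∀ y : Fin n → ℝ, ∀ f : (Fin n → ℝ) → ℂ, SmoothFn f →
    ∀ x, opApply m a f (x - y) = opApply m a (fun z => f (z - y)) x

/-- `L` is rotation invariant: `R^* L f = L R^* f` for all `R ∈ O(n)`. -/
def RotInvE {n : ℕ} (m : ℕ) (a : (Fin n → ℕ) → (Fin n → ℝ) → ℂ) : Prop :=
  ∀ R : Matrix (Fin n) (Fin n) ℝ, IsOrth R →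
    ∀ f : (Fin n → ℝ) → ℂ, SmoothFn f →
      ∀ x, opApply m a f (R.mulVec x) = opApply m a (fun z => f (R.mulVec z)) x

/-!
Test `L` on the exponentials `e_ξ(x) = exp (ξ · x)`, `ξ ∈ ℂⁿ`. Since `∂^α e_ξ = ξ^α e_ξ`, we get
`L e_ξ = p(x, ξ) e_ξ` with the symbol `p(x, ξ) = ∑ a_α(x) ξ^α`, and a polynomial identity in `ξ`
determines the coefficients. Translation invariance makes `p` independent of `x`; invariance
under `R ∈ O(n)` gives `p(0, ξ) = p(0, ᵗR ξ)`. The reflections `xᵢ ↦ -xᵢ` kill every coefficient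
with an odd exponent and the coordinate swaps equate the coefficients of the `ξᵢ²`, so
`p(0, ξ) = α ∑ ξᵢ² + β`.
-/

open Matrix

section Exponentials

variable {n : ℕ}

def linForm (ξ : Fin n → ℂ) : (Fin n → ℝ) →L[ℝ] ℂ :=
  ∑ j, ξ j • Complex.ofRealCLM.comp (ContinuousLinearMap.proj j)

lemma linForm_apply (ξ : Fin n → ℂ) (x : Fin n → ℝ) :
    linForm ξ x = ξ ⬝ᵥ fun j => (x j : ℂ) := by
  simp [linForm, dotProduct]

lemma linForm_single (ξ : Fin n → ℂ) (i : Fin n) : linForm ξ (Pi.single i 1) = ξ i := by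
  simp [linForm, Pi.single_apply, apply_ite]

def expLin (ξ : Fin n → ℂ) (x : Fin n → ℝ) : ℂ :=
  Complex.exp (linForm ξ x)

lemma expLin_add (ξ : Fin n → ℂ) (x y : Fin n → ℝ) :
    expLin ξ (x + y) = expLin ξ x * expLin ξ y := by
  simp only [expLin, map_add, Complex.exp_add]

lemma expLin_zero (ξ : Fin n → ℂ) : expLin ξ 0 = 1 := by
  simp [expLin]

lemma expLin_mulVec (ξ : Fin n → ℂ) (R : Matrix (Fin n) (Fin n) ℝ) (x : Fin n → ℝ) :
    expLin ξ (R *ᵥ x) = expLin (ξ ᵥ* R.map Complex.ofReal) x := by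
  have hcast : (fun j => ((R *ᵥ x) j : ℂ)) = R.map Complex.ofReal *ᵥ fun j => (x j : ℂ) :=
    funext fun j => RingHom.map_mulVec Complex.ofRealHom R x j
  simp only [expLin, linForm_apply, hcast, dotProduct_mulVec]

lemma smoothFn_expLin (ξ : Fin n → ℂ) : SmoothFn (expLin ξ) :=
  (Complex.contDiff_exp.restrict_scalars (𝕜' := ℂ) ℝ).comp (linForm ξ).contDiff

lemma pd_const_mul_expLin (ξ : Fin n → ℂ) (c : ℂ) (i : Fin n) :
    pd i (fun x => c * expLin ξ x) = fun x => c * ξ i * expLin ξ x := by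
  funext x
  have hexp : HasFDerivAt (expLin ξ) (expLin ξ x • linForm ξ) x :=
    (Complex.hasDerivAt_exp _).comp_hasFDerivAt x (linForm ξ).hasFDerivAt
  rw [pd, (hexp.const_mul c).fderiv]
  simp only [_root_.smul_apply, smul_eq_mul, linForm_single]
  ring

lemma iterate_pd_const_mul_expLin (ξ : Fin n → ℂ) (i : Fin n) (k : ℕ) (c : ℂ) :
    (pd i)^[k] (fun x => c * expLin ξ x) = fun x => c * ξ i ^ k * expLin ξ x := by
  induction k generalizing c with
  | zero => simp
  | succ k ih =>
    rw [Function.iterate_succ_apply, pd_const_mul_expLin, ih, pow_succ', mul_assoc]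

lemma pdMulti_const_mul_expLin (ξ : Fin n → ℂ) (α : Fin n → ℕ) (c : ℂ) :
    pdMulti α (fun x => c * expLin ξ x) = fun x => c * (∏ i, ξ i ^ α i) * expLin ξ x := by
  suffices h : ∀ (l : List (Fin n)) (c : ℂ),
      l.foldr (fun i v => (pd i)^[α i] v) (fun x => c * expLin ξ x)
        = fun x => c * (l.map fun i => ξ i ^ α i).prod * expLin ξ x by
    rw [pdMulti, h, Fin.prod_univ_def]
  intro l
  induction l with
  | nil => simp
  | cons j t ih =>
    intro c
    rw [List.foldr_cons, ih, iterate_pd_const_mul_expLin, List.map_cons, List.prod_cons]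
    ring_nf

end Exponentials

lemma pdMulti_zero {n : ℕ} (u : (Fin n → ℝ) → ℂ) : pdMulti 0 u = u := by
  simp [pdMulti]

lemma pdMulti_single {n : ℕ} (i : Fin n) (k : ℕ) (u : (Fin n → ℝ) → ℂ) :
    pdMulti (Pi.single i k) u = (pd i)^[k] u := by
  suffices h : ∀ l : List (Fin n), l.Nodup →
      l.foldr (fun j v => (pd j)^[(Pi.single i k : Fin n → ℕ) j] v) u
        = if i ∈ l then (pd i)^[k] u else u by
    rw [pdMulti, h _ (List.nodup_finRange n), if_pos (List.mem_finRange i)]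
  intro l hl
  induction l with
  | nil => simp
  | cons j t ih =>
    rw [List.foldr_cons, ih hl.of_cons]
    rcases eq_or_ne j i with rfl | hji
    · simp [(List.nodup_cons.mp hl).1]
    · simp [hji, hji.symm]

lemma eqOn_of_sum_mul_prod_pow_eq {R ι : Type*} [CommRing R] [IsDomain R] [Infinite R]
    [Fintype ι] {S : Finset (ι → ℕ)} {c d : (ι → ℕ) → R}
    (h : ∀ ξ : ι → R, ∑ α ∈ S, c α * ∏ i, ξ i ^ α i = ∑ α ∈ S, d α * ∏ i, ξ i ^ α i) :
    Set.EqOn c d S := by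
  classical
  let P : ((ι → ℕ) → R) → MvPolynomial ι R := fun e =>
    ∑ α ∈ S, MvPolynomial.monomial (Finsupp.equivFunOnFinite.symm α) (e α)
  have eval_P : ∀ e ξ, MvPolynomial.eval ξ (P e) = ∑ α ∈ S, e α * ∏ i, ξ i ^ α i := by
    intro e ξ
    simp only [P, map_sum, MvPolynomial.eval_monomial,
      Finsupp.prod_fintype _ _ fun i => pow_zero (ξ i), Finsupp.coe_equivFunOnFinite_symm]
  have coeff_P : ∀ e, ∀ α ∈ S, (P e).coeff (Finsupp.equivFunOnFinite.symm α) = e α := by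
    intro e α hα
    simp only [P, MvPolynomial.coeff_sum, MvPolynomial.coeff_monomial,
      Finsupp.equivFunOnFinite.symm.injective.eq_iff, Finset.sum_ite_eq', if_pos hα]
  have hP : P c = P d := MvPolynomial.funext fun ξ => by rw [eval_P, eval_P, h]
  intro α hα
  rw [← coeff_P c α hα, ← coeff_P d α hα, hP]

lemma mem_mIdx {n m : ℕ} {α : Fin n → ℕ} : α ∈ mIdx n m ↔ ∑ i, α i ≤ m := by
  refine Finset.mem_filter.trans ⟨And.right, fun h => ⟨Fintype.mem_piFinset.mpr fun i => ?_, h⟩⟩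
  exact Finset.mem_range_succ_iff.mpr
    ((Finset.single_le_sum (fun j _ => Nat.zero_le _) (Finset.mem_univ i)).trans h)

lemma comp_perm_mem_mIdx {n m : ℕ} {α : Fin n → ℕ} (σ : Equiv.Perm (Fin n)) :
    α ∘ σ ∈ mIdx n m ↔ α ∈ mIdx n m := by
  simp only [mem_mIdx, Function.comp_apply, Equiv.sum_comp]

lemma eq_zero_or_eq_single_two_of_even {n : ℕ} {α : Fin n → ℕ} (hdeg : ∑ i, α i ≤ 2)
    (heven : ∀ i, Even (α i)) : α = 0 ∨ ∃ i, α = Pi.single i 2 := by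
  rcases eq_or_ne α 0 with rfl | hne
  · exact Or.inl rfl
  obtain ⟨i, hi⟩ := Function.ne_iff.mp hne
  have hsplit := Finset.add_sum_erase Finset.univ α (Finset.mem_univ i)
  have hrest : ∀ j ≠ i, α j ≤ ∑ k ∈ Finset.univ.erase i, α k := fun j hj =>
    Finset.single_le_sum (fun _ _ => Nat.zero_le _) (Finset.mem_erase.mpr ⟨hj, Finset.mem_univ j⟩)
  obtain ⟨r, hr⟩ := heven i
  refine Or.inr ⟨i, funext fun j => ?_⟩
  rcases eq_or_ne j i with rfl | hj
  · simp only [Pi.single_eq_same, Pi.zero_apply] at hi ⊢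
    omega
  · obtain ⟨t, ht⟩ := heven j
    have := hrest j hj
    simp only [Pi.single_eq_of_ne hj, Pi.zero_apply] at hi ⊢
    omega

lemma sum_mIdx_two {n : ℕ} {M : Type*} [AddCommMonoid M] (g : (Fin n → ℕ) → M)
    (hg : ∀ α ∈ mIdx n 2, ∀ i, Odd (α i) → g α = 0) :
    ∑ α ∈ mIdx n 2, g α = g 0 + ∑ i, g (Pi.single i 2) := by
  classical
  have hsingle_ne : ∀ i, (Pi.single i 2 : Fin n → ℕ) ≠ 0 := fun i h => by
    simpa using congrFun h i
  have hsingle_inj : Function.Injective fun i : Fin n => (Pi.single i 2 : Fin n → ℕ) :=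
    fun i j h => by
      by_contra hij
      simpa [Pi.single_eq_of_ne hij] using congrFun h i
  have hsub : insert 0 (Finset.univ.image fun i => (Pi.single i 2 : Fin n → ℕ)) ⊆ mIdx n 2 := by
    intro α hα
    rcases Finset.mem_insert.mp hα with rfl | hα
    · simp [mem_mIdx]
    · obtain ⟨i, -, rfl⟩ := Finset.mem_image.mp hα
      simp [mem_mIdx]
  rw [← Finset.sum_subset hsub, Finset.sum_insert (by simp [hsingle_ne]),
    Finset.sum_image fun i _ j _ h => hsingle_inj h]
  intro α hα hαS
  by_cases hodd : ∃ i, Odd (α i)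
  · obtain ⟨i, hi⟩ := hodd
    exact hg α hα i hi
  have heven : ∀ i, Even (α i) := fun i => Nat.not_odd_iff_even.mp fun hi => hodd ⟨i, hi⟩
  rcases eq_zero_or_eq_single_two_of_even (mem_mIdx.mp hα) heven with rfl | ⟨i, rfl⟩ <;>
    simp at hαS

lemma isOrth_diagonal {n : ℕ} {s : Fin n → ℝ} (hs : ∀ j, s j * s j = 1) :
    IsOrth (diagonal s) := by
  rw [IsOrth, diagonal_transpose, diagonal_mul_diagonal, funext hs, diagonal_one]

lemma isOrth_permMatrix {n : ℕ} (σ : Equiv.Perm (Fin n)) : IsOrth (σ.permMatrix ℝ) := by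
  rw [IsOrth, transpose_permMatrix, ← permMatrix_mul, mul_inv_cancel, permMatrix_one]

def symbol {n : ℕ} (m : ℕ) (a : (Fin n → ℕ) → (Fin n → ℝ) → ℂ) (x : Fin n → ℝ)
    (ξ : Fin n → ℂ) : ℂ :=
  ∑ α ∈ mIdx n m, a α x * ∏ i, ξ i ^ α i

section Invariance

variable {n m : ℕ} {a : (Fin n → ℕ) → (Fin n → ℝ) → ℂ}

lemma opApply_const_mul_expLin (ξ : Fin n → ℂ) (c : ℂ) (x : Fin n → ℝ) :
    opApply m a (fun z => c * expLin ξ z) x = symbol m a x ξ * (c * expLin ξ x) := by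
  simp only [opApply, symbol, pdMulti_const_mul_expLin, Finset.sum_mul]
  exact Finset.sum_congr rfl fun α _ => by ring

lemma opApply_expLin (ξ : Fin n → ℂ) (x : Fin n → ℝ) :
    opApply m a (expLin ξ) x = symbol m a x ξ * expLin ξ x := by
  simpa using opApply_const_mul_expLin (m := m) (a := a) ξ 1 x

lemma TransInvE.coeff_eq_coeff_zero (hT : TransInvE m a) {α : Fin n → ℕ} (hα : α ∈ mIdx n m)
    (x : Fin n → ℝ) :
    a α x = a α 0 := by
  refine eqOn_of_sum_mul_prod_pow_eq (c := fun β => a β x) (d := fun β => a β 0) (fun ξ => ?_) hα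
  have h := hT x (expLin ξ) (smoothFn_expLin ξ) x
  have hshift : (fun z => expLin ξ (z - x)) = fun z => expLin ξ (-x) * expLin ξ z :=
    funext fun z => by rw [sub_eq_neg_add, expLin_add]
  rw [sub_self, opApply_expLin, expLin_zero, mul_one, hshift, opApply_const_mul_expLin,
    ← expLin_add, neg_add_cancel, expLin_zero, mul_one] at h
  exact h.symm

lemma RotInvE.symbol_zero_eq_vecMul (hR : RotInvE m a) {R : Matrix (Fin n) (Fin n) ℝ}
    (hO : IsOrth R) (ξ : Fin n → ℂ) :
    symbol m a 0 ξ = symbol m a 0 (ξ ᵥ* R.map Complex.ofReal) := by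
  have h := hR R hO (expLin ξ) (smoothFn_expLin ξ) 0
  rwa [mulVec_zero, opApply_expLin, expLin_zero, mul_one, funext (expLin_mulVec ξ R),
    opApply_expLin, expLin_zero, mul_one] at h

lemma RotInvE.coeff_zero_eq_zero_of_odd (hR : RotInvE m a) {α : Fin n → ℕ} (hα : α ∈ mIdx n m)
    {i : Fin n} (hodd : Odd (α i)) :
    a α 0 = 0 := by
  let s : Fin n → ℝ := Pi.mulSingle i (-1)
  have hs : ∀ j, s j * s j = 1 := fun j => by
    by_cases hj : j = i <;> simp [s, hj]
  have hflip : a α 0 = (-1) ^ α i * a α 0 := by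
    refine eqOn_of_sum_mul_prod_pow_eq (c := fun β => a β 0)
      (d := fun β => (-1) ^ β i * a β 0) (fun ξ => ?_) hα
    change symbol m a 0 ξ = _
    rw [hR.symbol_zero_eq_vecMul (isOrth_diagonal hs), diagonal_map Complex.ofReal_zero]
    simp only [symbol, vecMul_diagonal]
    refine Finset.sum_congr rfl fun β _ => ?_
    have hsign : ∏ j, ((s j : ℝ) : ℂ) ^ β j = (-1) ^ β i := by
      rw [Finset.prod_eq_single i (fun j _ hj => by simp [s, hj]) (by simp)]
      simp [s]
    simp only [mul_pow, Finset.prod_mul_distrib, hsign]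
    ring
  rw [hodd.neg_one_pow] at hflip
  linear_combination hflip / 2

lemma RotInvE.coeff_zero_comp_perm (hR : RotInvE m a) {α : Fin n → ℕ} (hα : α ∈ mIdx n m)
    (σ : Equiv.Perm (Fin n)) :
    a (α ∘ σ) 0 = a α 0 := by
  refine (eqOn_of_sum_mul_prod_pow_eq (c := fun β => a β 0) (d := fun β => a (β ∘ σ) 0)
    (fun ξ => ?_) hα).symm
  have hmap : (σ⁻¹.permMatrix ℝ).map Complex.ofReal = σ⁻¹.permMatrix ℂ := by
    ext i j
    simp [PEquiv.toMatrix_apply, apply_ite]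
  change symbol m a 0 ξ = _
  rw [hR.symbol_zero_eq_vecMul (isOrth_permMatrix σ⁻¹), hmap, vecMul_permMatrix, symbol]
  refine Finset.sum_equiv (σ.arrowCongr (Equiv.refl ℕ)) (fun β => ?_) (fun β _ => ?_)
  · exact (comp_perm_mem_mIdx σ.symm).symm
  · show a β 0 * ∏ i, ξ (σ i) ^ β i = a (β ∘ σ.symm ∘ σ) 0 * ∏ i, ξ i ^ β (σ.symm i)
    rw [← Equiv.prod_comp σ fun i => ξ i ^ β (σ.symm i)]
    simp

end Invariance

theorem second_order_euclidean_invariant_general (n : ℕ)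
    (a : (Fin n → ℕ) → (Fin n → ℝ) → ℂ)
    (htop : ∃ α ∈ mIdx n 2, (∑ i, α i) = 2 ∧ ∃ x, a α x ≠ 0)
    (hT : TransInvE 2 a) (hR : RotInvE 2 a) :
    ∃ α c : ℂ, α ≠ 0 ∧
      ∀ f : (Fin n → ℝ) → ℂ, SmoothFn f → ∀ x,
        opApply 2 a f x = α * lap f x + c * f x := by
  have hodd : ∀ α ∈ mIdx n 2, ∀ i, Odd (α i) → a α 0 = 0 := fun α hα _ hi =>
    hR.coeff_zero_eq_zero_of_odd hα hi
  obtain ⟨α₀, hα₀, hdeg, x₀, hx₀⟩ := htop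
  have hα₀ne : a α₀ 0 ≠ 0 := hT.coeff_eq_coeff_zero hα₀ x₀ ▸ hx₀
  obtain ⟨i₀, rfl⟩ : ∃ i, α₀ = Pi.single i 2 := by
    have heven : ∀ i, Even (α₀ i) := fun i =>
      Nat.not_odd_iff_even.mp fun hi => hα₀ne (hodd α₀ hα₀ i hi)
    rcases eq_zero_or_eq_single_two_of_even (mem_mIdx.mp hα₀) heven with rfl | h
    · simp at hdeg
    · exact h
  have hdiag : ∀ i, a (Pi.single i 2) 0 = a (Pi.single i₀ 2) 0 := fun i => by
    rw [← hR.coeff_zero_comp_perm hα₀ (Equiv.swap i i₀)]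
    congr 1
    funext j
    simp [Pi.single_apply, Equiv.swap_apply_eq_iff]
  refine ⟨a (Pi.single i₀ 2) 0, a 0 0, hα₀ne, fun f _ x => ?_⟩
  calc opApply 2 a f x = ∑ α ∈ mIdx n 2, a α 0 * pdMulti α f x :=
        Finset.sum_congr rfl fun α hα => by rw [hT.coeff_eq_coeff_zero hα]
    _ = a 0 0 * pdMulti 0 f x + ∑ i, a (Pi.single i 2) 0 * pdMulti (Pi.single i 2) f x :=
        sum_mIdx_two _ fun α hα i hi => by rw [hodd α hα i hi, zero_mul]
    _ = _ := by
        simp only [pdMulti_zero, pdMulti_single, Function.iterate_succ_apply,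
          Function.iterate_zero_apply, hdiag, lap, Finset.mul_sum]
        ring

/-- Corollary 3: Any Euclidean motion invariant linear partial
differential operator of the second order on `ℝⁿ` is of the form `L = α Δ + β` with
`α ≠ 0`. -/
theorem second_order_euclidean_invariant (n : ℕ)
    (a : (Fin n → ℕ) → (Fin n → ℝ) → ℂ)
    (hcont : ∀ α ∈ mIdx n 2, Continuous (a α))
    (htop : ∃ α ∈ mIdx n 2, (∑ i, α i) = 2 ∧ ∃ x, a α x ≠ 0)
    (hT : TransInvE 2 a) (hR : RotInvE 2 a) :
    ∃ α c : ℂ, α ≠ 0 ∧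
      ∀ f : (Fin n → ℝ) → ℂ, SmoothFn f → ∀ x,
        opApply 2 a f x = α * lap f x + c * f x :=
  second_order_euclidean_invariant_general n a htop hT hR
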